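/- arXiv:2104.11268 — 5 statements merged into one kernel-verified Lean document; each statement's English description precedes it below -/
import Mathlib

section
/- Let K ≥ 1, let T : Fin K → Fin K → Fin K → ℝ be a fully symmetric tensor, and for a ∈ ℝ^K let 𝒫(a) be the K×K matrix with entries 𝒫(a)_{ℓ,m} = Σ_k a_k · T k ℓ m. Let g > 0 and let ĥ, q̂ˣ, q̂ʸ ∈ ℝ^K be such that 𝒫(ĥ) is positive definite. Set û = 𝒫(ĥ)⁻¹ q̂ˣ, v̂ = 𝒫(ĥ)⁻¹ q̂ʸ, X = 𝒫(q̂ˣ)𝒫(ĥ)⁻¹, Y = 𝒫(q̂ʸ)𝒫(ĥ)⁻¹, and define the 3K×3K block matrices J_F = [[0, I, 0], [g𝒫(ĥ) − X𝒫(û), X + 𝒫(û), 0], [−X𝒫(v̂), 𝒫(v̂), X]] and J_G = [[0, 0, I], [−Y𝒫(û), Y, 𝒫(û)], [g𝒫(ĥ) − Y𝒫(v̂), 0, Y + 𝒫(v̂)]]. Then for every n_x, n_y ∈ ℝ with n_x² + n_y² = 1, the matrix n_x J_F + n_y J_G is similar over ℝ to a real symmetric matrix; in particular there exist an invertible real matrix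 S and a diagonal real matrix D such that n_x J_F + n_y J_G = S D S⁻¹. -/
open Matrix BigOperators

/-- The Galerkin (triple-product) matrix `𝒫(a)` associated with a coefficient
vector `a` and a tensor `T`: `𝒫(a)_{ℓ,m} = Σ_k a_k · T k ℓ m`. -/
def Pmat (K : ℕ) (T : Fin K → Fin K → Fin K → ℝ) (a : Fin K → ℝ) :
    Matrix (Fin K) (Fin K) ℝ :=
  Matrix.of fun ℓ m => ∑ k, a k * T k ℓ m

/-- Assemble a `3K × 3K` matrix from a `3 × 3` array of `K × K` blocks. -/
def block3 (K : ℕ) (M : Matrix (Fin 3) (Fin 3) (Matrix (Fin K) (Fin K) ℝ)) :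
    Matrix (Fin 3 × Fin K) (Fin 3 × Fin K) ℝ :=
  Matrix.of fun p q => M p.1 q.1 p.2 q.2

/-!
Factor `𝒫(ĥ) = L Lᵀ` with `L` invertible and put `s = √g`. For the block lower-triangular matrix
`S = [[s⁻¹ I, 0, 0], [s⁻¹ 𝒫(û), L, 0], [s⁻¹ 𝒫(v̂), 0, L]]` one checks `J_F S = S B_F` and
`J_G S = S B_G` with
`B_F = [[𝒫(û), s L, 0], [s Lᵀ, L⁻¹ X L, 0], [0, 0, L⁻¹ X L]]` and
`B_G = [[𝒫(v̂), 0, s L], [0, L⁻¹ Y L, 0], [s Lᵀ, 0, L⁻¹ Y L]]`.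
These are symmetric because every `𝒫(a)` is, and `L⁻¹ X L = L⁻¹ 𝒫(q̂ˣ) L⁻ᵀ`. Hence
`S⁻¹ (n_x J_F + n_y J_G) S` is symmetric, and the spectral theorem diagonalizes it.
-/

theorem Pmat_isSymm {K : ℕ} {T : Fin K → Fin K → Fin K → ℝ} (hT : ∀ k ℓ m, T k ℓ m = T k m ℓ)
    (a : Fin K → ℝ) : (Pmat K T a).IsSymm :=
  IsSymm.ext fun ℓ m => by simp only [Pmat, of_apply, hT _ m ℓ]

namespace Matrix

variable {n : Type*} [Fintype n] [DecidableEq n]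

open scoped MatrixOrder in
theorem PosDef.exists_eq_mul_transpose {P : Matrix n n ℝ} (hP : P.PosDef) :
    ∃ L : Matrix n n ℝ, IsUnit L.det ∧ P = L * Lᵀ := by
  obtain ⟨y, hy, rfl⟩ :=
    CStarAlgebra.isStrictlyPositive_iff_eq_star_mul_self.mp hP.isStrictlyPositive
  refine ⟨yᵀ, by rwa [det_transpose, ← isUnit_iff_isUnit_det], ?_⟩
  simp [star_eq_conjTranspose]

theorem IsSymm.exists_isDiag_eq_mul_mul_inv {B : Matrix n n ℝ} (hB : B.IsSymm) :
    ∃ O D : Matrix n n ℝ, IsUnit O.det ∧ D.IsDiag ∧ B = O * D * O⁻¹ := by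
  have hH : B.IsHermitian := isHermitian_iff_isSymm.mpr hB
  have hO := Unitary.mul_star_self_of_mem hH.eigenvectorUnitary.2
  refine ⟨hH.eigenvectorUnitary, diagonal (RCLike.ofReal ∘ hH.eigenvalues),
    isUnit_det_of_right_inverse hO, isDiag_diagonal _, ?_⟩
  rw [inv_eq_right_inv hO]
  exact hH.spectral_theorem

theorem exists_isDiag_eq_mul_mul_inv_of_isSymm_conj {A S : Matrix n n ℝ} (hS : IsUnit S.det)
    (hA : (S⁻¹ * A * S).IsSymm) :
    ∃ S D : Matrix n n ℝ, IsUnit S.det ∧ D.IsDiag ∧ A = S * D * S⁻¹ := by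
  obtain ⟨O, D, hO, hD, hB⟩ := hA.exists_isDiag_eq_mul_mul_inv
  refine ⟨S * O, D, by simpa [det_mul] using hS.mul hO, hD, ?_⟩
  calc A = S * (S⁻¹ * A * S) * S⁻¹ := by
        rw [mul_assoc S⁻¹, mul_nonsing_inv_cancel_left _ _ hS, mul_nonsing_inv_cancel_right _ _ hS]
    _ = S * O * D * (S * O)⁻¹ := by rw [hB, mul_inv_rev]; simp only [mul_assoc]

theorem isSymm_inv_mul_mul_of_isSymm_mul_mul_transpose {α : Type*} [CommRing α]
    {L X : Matrix n n α} (hL : IsUnit L.det) (hX : (X * (L * Lᵀ)).IsSymm) :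
    (L⁻¹ * X * L).IsSymm := by
  have hLt : IsUnit Lᵀ.det := by rwa [det_transpose]
  have h : L⁻¹ * X * L = L⁻¹ * (X * (L * Lᵀ)) * Lᵀ⁻¹ := by
    rw [← mul_assoc X, mul_assoc _ _ Lᵀ⁻¹, mul_nonsing_inv_cancel_right _ _ hLt, mul_assoc]
  rw [h, IsSymm, transpose_mul, transpose_mul, hX.eq, ← transpose_nonsing_inv,
    transpose_transpose, transpose_nonsing_inv]
  simp only [mul_assoc]

end Matrix

section FluxJacobian

variable {𝕜 : Type*} [Field 𝕜] {n : Type*} [Fintype n] [DecidableEq n]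

def fluxJacobianX (g : 𝕜) (P U V X : Matrix n n 𝕜) : Matrix (Fin 3) (Fin 3) (Matrix n n 𝕜) :=
  !![0, 1, 0; g • P - X * U, X + U, 0; -(X * V), V, X]

def fluxJacobianY (g : 𝕜) (P U V Y : Matrix n n 𝕜) : Matrix (Fin 3) (Fin 3) (Matrix n n 𝕜) :=
  !![0, 0, 1; -(Y * U), Y, U; g • P - Y * V, 0, Y + V]

def symmetrizingFactor (s : 𝕜) (U V L : Matrix n n 𝕜) : Matrix (Fin 3) (Fin 3) (Matrix n n 𝕜) :=
  !![s⁻¹ • 1, 0, 0; s⁻¹ • U, L, 0; s⁻¹ • V, 0, L]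

def symmetrizedFluxJacobianX (s : 𝕜) (U L E : Matrix n n 𝕜) :
    Matrix (Fin 3) (Fin 3) (Matrix n n 𝕜) :=
  !![U, s • L, 0; s • Lᵀ, E, 0; 0, 0, E]

def symmetrizedFluxJacobianY (s : 𝕜) (V L E : Matrix n n 𝕜) :
    Matrix (Fin 3) (Fin 3) (Matrix n n 𝕜) :=
  !![V, 0, s • L; 0, E, 0; s • Lᵀ, 0, E]

variable {g s : 𝕜} {P U V X Y L : Matrix n n 𝕜}

theorem fluxJacobianX_mul_symmetrizingFactor (hs : s ≠ 0) (hg : g = s * s) (hL : IsUnit L.det)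
    (hP : P = L * Lᵀ) :
    fluxJacobianX g P U V X * symmetrizingFactor s U V L =
      symmetrizingFactor s U V L * symmetrizedFluxJacobianX s U L (L⁻¹ * X * L) := by
  subst hg hP
  ext1 i j
  fin_cases i <;> fin_cases j <;>
    simp [fluxJacobianX, symmetrizingFactor, symmetrizedFluxJacobianX, mul_apply,
      Fin.sum_univ_three, smul_smul, smul_sub, inv_mul_cancel_left₀ hs, mul_inv_cancel₀ hs,
      mul_nonsing_inv_cancel_left _ _ hL, add_mul, mul_assoc] <;> abel

theorem fluxJacobianY_mul_symmetrizingFactor (hs : s ≠ 0) (hg : g = s * s) (hL : IsUnit L.det)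
    (hP : P = L * Lᵀ) :
    fluxJacobianY g P U V Y * symmetrizingFactor s U V L =
      symmetrizingFactor s U V L * symmetrizedFluxJacobianY s V L (L⁻¹ * Y * L) := by
  subst hg hP
  ext1 i j
  fin_cases i <;> fin_cases j <;>
    simp [fluxJacobianY, symmetrizingFactor, symmetrizedFluxJacobianY, mul_apply,
      Fin.sum_univ_three, smul_smul, smul_sub, inv_mul_cancel_left₀ hs, mul_inv_cancel₀ hs,
      mul_nonsing_inv_cancel_left _ _ hL, add_mul, mul_assoc] <;> abel

theorem symmetrizingFactor_mul_eq_one (hs : s ≠ 0) (hL : IsUnit L.det) :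
    symmetrizingFactor s U V L * !![s • 1, 0, 0; -(L⁻¹ * U), L⁻¹, 0; -(L⁻¹ * V), 0, L⁻¹] = 1 := by
  ext1 i j
  fin_cases i <;> fin_cases j <;>
    simp [symmetrizingFactor, mul_apply, Fin.sum_univ_three, smul_smul, hs,
      mul_nonsing_inv_cancel_left _ _ hL, mul_nonsing_inv _ hL, one_apply]

theorem exists_isSymm_conj_comp_fluxJacobian (hs : s ≠ 0) (hg : g = s * s) (hL : IsUnit L.det)
    (hP : P = L * Lᵀ) (hU : U.IsSymm) (hV : V.IsSymm) (hX : (X * P).IsSymm)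
    (hY : (Y * P).IsSymm) (nx ny : 𝕜) :
    ∃ S : Matrix (Fin 3 × n) (Fin 3 × n) 𝕜, IsUnit S.det ∧
      (S⁻¹ * comp (Fin 3) (Fin 3) n n 𝕜
        (nx • fluxJacobianX g P U V X + ny • fluxJacobianY g P U V Y) * S).IsSymm := by
  set c := compAlgEquiv (Fin 3) n 𝕜 𝕜
  set B := nx • symmetrizedFluxJacobianX s U L (L⁻¹ * X * L) +
    ny • symmetrizedFluxJacobianY s V L (L⁻¹ * Y * L)
  have hAS : c (nx • fluxJacobianX g P U V X + ny • fluxJacobianY g P U V Y) *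
      c (symmetrizingFactor s U V L) = c (symmetrizingFactor s U V L) * c B := by
    rw [← map_mul, ← map_mul, add_mul, mul_add, smul_mul, smul_mul, Matrix.mul_smul,
      Matrix.mul_smul, fluxJacobianX_mul_symmetrizingFactor hs hg hL hP,
      fluxJacobianY_mul_symmetrizingFactor hs hg hL hP]
  have hS : IsUnit (c (symmetrizingFactor s U V L)).det :=
    isUnit_det_of_right_inverse (by rw [← map_mul, symmetrizingFactor_mul_eq_one hs hL, map_one])
  refine ⟨c (symmetrizingFactor s U V L), hS, ?_⟩
  change (_ * c _ * _).IsSymm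
  rw [mul_assoc, hAS, nonsing_inv_mul_cancel_left _ _ hS]
  have hXL := isSymm_inv_mul_mul_of_isSymm_mul_mul_transpose hL (hP ▸ hX)
  have hYL := isSymm_inv_mul_mul_of_isSymm_mul_mul_transpose hL (hP ▸ hY)
  refine isSymm_comp_iff.2 ?_
  ext1 i j
  fin_cases i <;> fin_cases j <;> simp [B, symmetrizedFluxJacobianX, symmetrizedFluxJacobianY,
    hU.eq, hV.eq, hXL.eq, hYL.eq]

end FluxJacobian

theorem sg_swe_hyperbolic_of_posdef_general
    (K : ℕ) (T : Fin K → Fin K → Fin K → ℝ)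
    (hT2 : ∀ k ℓ m, T k ℓ m = T k m ℓ)
    (g : ℝ) (hg : 0 < g)
    (h qx qy : Fin K → ℝ)
    (hpd : (Pmat K T h).PosDef)
    (u v : Fin K → ℝ)
    (X Y : Matrix (Fin K) (Fin K) ℝ)
    (hX : X = Pmat K T qx * (Pmat K T h)⁻¹)
    (hY : Y = Pmat K T qy * (Pmat K T h)⁻¹)
    (JF JG : Matrix (Fin 3 × Fin K) (Fin 3 × Fin K) ℝ)
    (hJF : JF = block3 K
      !![(0 : Matrix (Fin K) (Fin K) ℝ), 1, 0;
         g • Pmat K T h - X * Pmat K T u, X + Pmat K T u, 0;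
         -(X * Pmat K T v), Pmat K T v, X])
    (hJG : JG = block3 K
      !![(0 : Matrix (Fin K) (Fin K) ℝ), 0, 1;
         -(Y * Pmat K T u), Y, Pmat K T u;
         g • Pmat K T h - Y * Pmat K T v, 0, Y + Pmat K T v]) :
    ∀ nx ny : ℝ, nx ^ 2 + ny ^ 2 = 1 →
      (∃ S : Matrix (Fin 3 × Fin K) (Fin 3 × Fin K) ℝ,
          IsUnit S.det ∧ (S⁻¹ * (nx • JF + ny • JG) * S).IsSymm) ∧
      (∃ S D : Matrix (Fin 3 × Fin K) (Fin 3 × Fin K) ℝ,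
          IsUnit S.det ∧ D.IsDiag ∧ nx • JF + ny • JG = S * D * S⁻¹) := by
  intro nx ny _
  have hsymm := Pmat_isSymm hT2
  have hflux (a : Fin K → ℝ) : (Pmat K T a * (Pmat K T h)⁻¹ * Pmat K T h).IsSymm := by
    rw [nonsing_inv_mul_cancel_right _ _ hpd.det_pos.ne'.isUnit]
    exact hsymm a
  obtain ⟨L, hL, hPL⟩ := hpd.exists_eq_mul_transpose
  have hJ : nx • JF + ny • JG = comp (Fin 3) (Fin 3) (Fin K) (Fin K) ℝ
      (nx • fluxJacobianX g (Pmat K T h) (Pmat K T u) (Pmat K T v) X +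
        ny • fluxJacobianY g (Pmat K T h) (Pmat K T u) (Pmat K T v) Y) := by
    subst hJF hJG
    rfl
  obtain ⟨S, hS, hconj⟩ := exists_isSymm_conj_comp_fluxJacobian (Real.sqrt_pos.2 hg).ne'
    (Real.mul_self_sqrt hg.le).symm hL hPL (hsymm u) (hsymm v) (hX ▸ hflux qx) (hY ▸ hflux qy)
    nx ny
  rw [hJ]
  exact ⟨⟨S, hS, hconj⟩, exists_isDiag_eq_mul_mul_inv_of_isSymm_conj hS hconj⟩

theorem sg_swe_hyperbolic_of_posdef
    (K : ℕ) (hK : 1 ≤ K) (T : Fin K → Fin K → Fin K → ℝ)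
    (hT1 : ∀ k ℓ m, T k ℓ m = T ℓ k m)
    (hT2 : ∀ k ℓ m, T k ℓ m = T k m ℓ)
    (g : ℝ) (hg : 0 < g)
    (h qx qy : Fin K → ℝ)
    (hpd : (Pmat K T h).PosDef)
    (u v : Fin K → ℝ)
    (hu : u = (Pmat K T h)⁻¹ *ᵥ qx)
    (hv : v = (Pmat K T h)⁻¹ *ᵥ qy)
    (X Y : Matrix (Fin K) (Fin K) ℝ)
    (hX : X = Pmat K T qx * (Pmat K T h)⁻¹)
    (hY : Y = Pmat K T qy * (Pmat K T h)⁻¹)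
    (JF JG : Matrix (Fin 3 × Fin K) (Fin 3 × Fin K) ℝ)
    (hJF : JF = block3 K
      !![(0 : Matrix (Fin K) (Fin K) ℝ), 1, 0;
         g • Pmat K T h - X * Pmat K T u, X + Pmat K T u, 0;
         -(X * Pmat K T v), Pmat K T v, X])
    (hJG : JG = block3 K
      !![(0 : Matrix (Fin K) (Fin K) ℝ), 0, 1;
         -(Y * Pmat K T u), Y, Pmat K T u;
         g • Pmat K T h - Y * Pmat K T v, 0, Y + Pmat K T v]) :
    ∀ nx ny : ℝ, nx ^ 2 + ny ^ 2 = 1 →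
      (∃ S : Matrix (Fin 3 × Fin K) (Fin 3 × Fin K) ℝ,
          IsUnit S.det ∧ (S⁻¹ * (nx • JF + ny • JG) * S).IsSymm) ∧
      (∃ S D : Matrix (Fin 3 × Fin K) (Fin 3 × Fin K) ℝ,
          IsUnit S.det ∧ D.IsDiag ∧ nx • JF + ny • JG = S * D * S⁻¹) :=
  sg_swe_hyperbolic_of_posdef_general K T hT2 g hg h qx qy hpd u v X Y hX hY JF JG hJF hJG
end

section
/- Let K ≥ 1, let A, B, C, D be real symmetric K×K matrices and let E be a real symmetric positive definite K×K matrix. Set X = A E⁻² and Y = C E⁻², and define the 3K×3K block matrices F' = [[0, I, 0], [E² − X B, X + B, 0], [−X D, D, X]] and G' = [[0, 0, I], [−Y B, Y, B], [E² − Y D, 0, Y + D]]. Then for every n_x, n_y ∈ ℝ with n_x² + n_y² = 1, the matrix n_x F' + n_y G' is similar over ℝ to a real symmetric matrix, and hence is diagonalizable with real eigenvalues. -/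
open Matrix BigOperators

lemma block3_mul (K : ℕ) (M N : Matrix (Fin 3) (Fin 3) (Matrix (Fin K) (Fin K) ℝ)) :
    block3 K M * block3 K N = block3 K (M * N) := by
  ext ⟨i, k⟩ ⟨j, l⟩
  simp [block3, Matrix.mul_apply, Matrix.sum_apply, Fintype.sum_prod_type]

lemma block3_one (K : ℕ) : block3 K 1 = 1 := by
  ext ⟨i, k⟩ ⟨j, l⟩
  by_cases h : i = j
  · subst h
    by_cases h2 : k = l <;> simp [block3, Matrix.one_apply, h2, Prod.ext_iff]
  · simp [block3, Matrix.one_apply, h, Prod.ext_iff]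

lemma block3_add (K : ℕ) (M N : Matrix (Fin 3) (Fin 3) (Matrix (Fin K) (Fin K) ℝ)) :
    block3 K (M + N) = block3 K M + block3 K N := rfl

lemma block3_smul (K : ℕ) (c : ℝ) (M : Matrix (Fin 3) (Fin 3) (Matrix (Fin K) (Fin K) ℝ)) :
    block3 K (c • M) = c • block3 K M := rfl

lemma block3_isSymm (K : ℕ) (M : Matrix (Fin 3) (Fin 3) (Matrix (Fin K) (Fin K) ℝ))
    (h : ∀ i j, (M i j)ᵀ = M j i) : (block3 K M).IsSymm := by
  ext ⟨i, k⟩ ⟨j, l⟩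
  have := congrFun (congrFun (h j i) k) l
  simpa [block3, Matrix.transpose_apply] using this

set_option maxHeartbeats 2000000 in
theorem sg_flux_pencil_similar_symmetric
    (K : ℕ) (hK : 1 ≤ K)
    (A B C D E : Matrix (Fin K) (Fin K) ℝ)
    (hA : A.IsSymm) (hB : B.IsSymm) (hC : C.IsSymm) (hD : D.IsSymm)
    (hE : E.PosDef)
    (X Y : Matrix (Fin K) (Fin K) ℝ)
    (hX : X = A * (E⁻¹ * E⁻¹)) (hY : Y = C * (E⁻¹ * E⁻¹))
    (F' G' : Matrix (Fin 3 × Fin K) (Fin 3 × Fin K) ℝ)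
    (hF : F' = block3 K
      !![(0 : Matrix (Fin K) (Fin K) ℝ), 1, 0;
         E * E - X * B, X + B, 0;
         -(X * D), D, X])
    (hG : G' = block3 K
      !![(0 : Matrix (Fin K) (Fin K) ℝ), 0, 1;
         -(Y * B), Y, B;
         E * E - Y * D, 0, Y + D]) :
    ∀ nx ny : ℝ, nx ^ 2 + ny ^ 2 = 1 →
      (∃ S : Matrix (Fin 3 × Fin K) (Fin 3 × Fin K) ℝ,
          IsUnit S.det ∧ (S⁻¹ * (nx • F' + ny • G') * S).IsSymm) ∧
      (∃ S Λ : Matrix (Fin 3 × Fin K) (Fin 3 × Fin K) ℝ,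
          IsUnit S.det ∧ Λ.IsDiag ∧ nx • F' + ny • G' = S * Λ * S⁻¹) := by
  intro nx ny hn
  have hEdet : IsUnit E.det := isUnit_iff_ne_zero.2 hE.det_pos.ne'
  have hEE1 : E * E⁻¹ = 1 := Matrix.mul_nonsing_inv E hEdet
  have hE1E : E⁻¹ * E = 1 := Matrix.nonsing_inv_mul E hEdet
  have hc1 : ∀ Zm : Matrix (Fin K) (Fin K) ℝ, E * (E⁻¹ * Zm) = Zm := by
    intro Zm; rw [← Matrix.mul_assoc, hEE1, Matrix.one_mul]
  have hc2 : ∀ Zm : Matrix (Fin K) (Fin K) ℝ, E⁻¹ * (E * Zm) = Zm := by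
    intro Zm; rw [← Matrix.mul_assoc, hE1E, Matrix.one_mul]
  have hEsymm : Eᵀ = E := by
    have := hE.isHermitian
    rwa [Matrix.IsHermitian, Matrix.conjTranspose_eq_transpose_of_trivial] at this
  have hE1symm : (E⁻¹)ᵀ = E⁻¹ := by
    rw [Matrix.transpose_nonsing_inv, hEsymm]
  -- block data
  set P : Matrix (Fin K) (Fin K) ℝ := nx • B + ny • D with hP
  set Q : Matrix (Fin K) (Fin K) ℝ := nx • D - ny • B with hQ
  set Z : Matrix (Fin K) (Fin K) ℝ := nx • A + ny • C with hZ
  set W : Matrix (Fin K) (Fin K) ℝ := E⁻¹ * (Z * E⁻¹) with hW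
  set Sb : Matrix (Fin 3) (Fin 3) (Matrix (Fin K) (Fin K) ℝ) :=
    !![1, 0, 0; B, nx • E, (-ny) • E; D, ny • E, nx • E] with hSb
  set Tb : Matrix (Fin 3) (Fin 3) (Matrix (Fin K) (Fin K) ℝ) :=
    !![1, 0, 0; -(E⁻¹ * P), nx • E⁻¹, ny • E⁻¹; -(E⁻¹ * Q), (-ny) • E⁻¹, nx • E⁻¹] with hTb
  set Sgb : Matrix (Fin 3) (Fin 3) (Matrix (Fin K) (Fin K) ℝ) :=
    !![P, E, 0; E, W, 0; 0, 0, W] with hSgb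
  set S := block3 K Sb with hS
  set T := block3 K Tb with hT
  set Sgm := block3 K Sgb with hSgm
  have hSTb : Sb * Tb = 1 := by
    apply Matrix.ext
    intro i j
    fin_cases i <;> fin_cases j <;>
      simp [Matrix.mul_apply, Fin.sum_univ_three, Matrix.one_apply, hP, hQ, hSb, hTb,
        mul_add, mul_sub, add_mul, sub_mul, Matrix.mul_smul, Matrix.smul_mul,
        hEE1, hE1E, hc1, hc2, smul_smul, smul_add, smul_sub] <;>
      (match_scalars <;> first | ring1 | linear_combination hn | linear_combination -hn)
  have hST : S * T = 1 := by
    rw [hS, hT, block3_mul, hSTb, block3_one]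
  have hTSb : Tb * Sb = 1 := by
    apply Matrix.ext
    intro i j
    fin_cases i <;> fin_cases j <;>
      simp [Matrix.mul_apply, Fin.sum_univ_three, Matrix.one_apply, hP, hQ, hSb, hTb,
        mul_add, mul_sub, add_mul, sub_mul, Matrix.mul_smul, Matrix.smul_mul,
        hEE1, hE1E, hc1, hc2, smul_smul, smul_add, smul_sub] <;>
      (match_scalars <;> first | ring1 | linear_combination hn | linear_combination -hn)
  have hTS : T * S = 1 := by
    rw [hT, hS, block3_mul, hTSb, block3_one]
  have hSdet : IsUnit S.det := Matrix.isUnit_det_of_right_inverse hST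
  have hSinv : S⁻¹ = T := Matrix.inv_eq_right_inv hST
  -- the key similarity identity
  have hMSb : ∀ Fb Gb : Matrix (Fin 3) (Fin 3) (Matrix (Fin K) (Fin K) ℝ),
      Fb = !![(0 : Matrix (Fin K) (Fin K) ℝ), 1, 0;
         E * E - X * B, X + B, 0;
         -(X * D), D, X] →
      Gb = !![(0 : Matrix (Fin K) (Fin K) ℝ), 0, 1;
         -(Y * B), Y, B;
         E * E - Y * D, 0, Y + D] →
      (nx • Fb + ny • Gb) * Sb = Sb * Sgb := by
    intro Fb Gb hFb hGb
    subst hFb hGb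
    apply Matrix.ext
    intro i j
    fin_cases i <;> fin_cases j <;>
      simp [Matrix.mul_apply, Fin.sum_univ_three, hX, hY, hP, hZ, hW, hSb, hSgb,
        mul_add, mul_sub, add_mul, sub_mul, Matrix.mul_smul, Matrix.smul_mul,
        Matrix.mul_assoc, hEE1, hE1E, hc1, hc2, smul_smul, smul_add, smul_sub] <;>
      (match_scalars <;> first | ring1 | linear_combination hn | linear_combination -hn)
  have hMS : (nx • F' + ny • G') * S = S * Sgm := by
    rw [hF, hG, hS, hSgm, ← block3_smul, ← block3_smul, ← block3_add, block3_mul, block3_mul,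
      hMSb _ _ rfl rfl]
  have hSgsymm : Sgm.IsSymm := by
    have hPs : Pᵀ = P := by
      rw [hP, Matrix.transpose_add, Matrix.transpose_smul, Matrix.transpose_smul, hB.eq, hD.eq]
    have hWs : Wᵀ = W := by
      rw [hW, Matrix.transpose_mul, Matrix.transpose_mul, hE1symm, hZ,
        Matrix.transpose_add, Matrix.transpose_smul, Matrix.transpose_smul, hA.eq, hC.eq,
        Matrix.mul_assoc]
    refine block3_isSymm K Sgb ?_
    intro i j
    fin_cases i <;> fin_cases j <;> simp [hSgb, hPs, hWs, hEsymm]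
  have hconj : S⁻¹ * (nx • F' + ny • G') * S = Sgm := by
    rw [Matrix.mul_assoc, hMS, ← Matrix.mul_assoc, hSinv, hTS, Matrix.one_mul]
  have hM : nx • F' + ny • G' = S * Sgm * S⁻¹ := by
    have := congrArg (fun M => M * S⁻¹) hMS
    simpa [Matrix.mul_assoc, hSinv, hST, hTS] using this
  constructor
  · exact ⟨S, hSdet, by rw [hconj]; exact hSgsymm⟩
  · -- spectral theorem for Sgm
    have hherm : Sgm.IsHermitian := by
      rwa [Matrix.IsHermitian, Matrix.conjTranspose_eq_transpose_of_trivial]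
    obtain ⟨U, Λ, hUdet, hUinv, hΛ, hspec⟩ :
        ∃ U Λ : Matrix (Fin 3 × Fin K) (Fin 3 × Fin K) ℝ,
          IsUnit U.det ∧ U⁻¹ = star U ∧ Λ.IsDiag ∧ Sgm = U * Λ * U⁻¹ := by
      refine ⟨(hherm.eigenvectorUnitary : Matrix (Fin 3 × Fin K) (Fin 3 × Fin K) ℝ),
        Matrix.diagonal (RCLike.ofReal ∘ hherm.eigenvalues), ?_, ?_, Matrix.isDiag_diagonal _, ?_⟩
      · exact Matrix.isUnit_det_of_right_inverse
          ((Matrix.mem_unitaryGroup_iff).mp (hherm.eigenvectorUnitary).2)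
      · exact Matrix.inv_eq_right_inv
          ((Matrix.mem_unitaryGroup_iff).mp (hherm.eigenvectorUnitary).2)
      · rw [Matrix.inv_eq_right_inv
          ((Matrix.mem_unitaryGroup_iff).mp (hherm.eigenvectorUnitary).2)]
        exact hherm.spectral_theorem
    refine ⟨S * U, Λ, ?_, hΛ, ?_⟩
    · rw [Matrix.det_mul]; exact hSdet.mul hUdet
    · rw [hM, hspec, Matrix.mul_inv_rev]
      noncomm_ring
end

section
/- Let (Ω, μ) be a measure space, K ≥ 1, and φ_1, …, φ_K : Ω → ℝ measurable functions such that every triple product φ_k φ_ℓ φ_m is μ-integrable and the family is orthonormal: ∫ φ_k φ_ℓ dμ = δ_{kℓ} for all k, ℓ. Let M ≥ 1, let ξ_1, …, ξ_M ∈ Ω and τ_1, …, τ_M > 0 be quadrature nodes and weights such that for all indices k, ℓ, m: ∫ φ_k φ_ℓ φ_m dμ = Σ_{j=1}^M τ_j φ_k(ξ_j) φ_ℓ(ξ_j) φ_m(ξ_j), and for all k, ℓ: ∫ φ_k φ_ℓ dμ = Σ_{j=1}^M τ_j φ_k(ξ_j) φ_ℓ(ξ_j). Let ĥ ∈ ℝ^K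 satisfy Σ_k ĥ_k φ_k(ξ_j) > 0 for every j = 1, …, M. Then the K×K matrix 𝒫(ĥ) with entries 𝒫(ĥ)_{ℓ,m} = Σ_k ĥ_k ∫ φ_k φ_ℓ φ_m dμ is symmetric positive definite. -/
/-!
Let `V` be the nodal matrix `V j ℓ = φ ℓ (ξ j)`. Exactness of the quadrature on products of
two basis functions together with orthonormality gives `Vᵀ diag(τ) V = 1`, so `V` is injective.
Exactness on triple products writes the Galerkin matrix as `Vᵀ diag(τ j * h_Λ(ξ j)) V`, a
congruence of a positive diagonal matrix by an injective map, hence positive definite.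
-/

open Matrix MeasureTheory

lemma Matrix.mulVec_injective_of_mul_eq_one {m n R : Type*} [Fintype m] [Fintype n]
    [DecidableEq n] [CommSemiring R] {A : Matrix n m R} {B : Matrix m n R} (hAB : A * B = 1) :
    Function.Injective B.mulVec := fun x y hxy => by
  simpa only [mulVec_mulVec, hAB, one_mulVec] using congrArg (A *ᵥ ·) hxy

def nodalMatrix {Ω ι κ : Type*} (φ : κ → Ω → ℝ) (ξ : ι → Ω) : Matrix ι κ ℝ :=
  Matrix.of fun j ℓ => φ ℓ (ξ j)

section Quadrature

variable {Ω ι κ : Type*} [Fintype ι] [DecidableEq ι] {φ : κ → Ω → ℝ} {ξ : ι → Ω}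

lemma transpose_nodalMatrix_mul_diagonal_mul_apply (w : ι → ℝ) (ℓ m : κ) :
    ((nodalMatrix φ ξ)ᵀ * diagonal w * nodalMatrix φ ξ) ℓ m =
      ∑ j, w j * (φ ℓ (ξ j) * φ m (ξ j)) := by
  rw [mul_apply]
  simp only [mul_diagonal, transpose_apply, nodalMatrix, of_apply]
  exact Finset.sum_congr rfl fun j _ => by ring

variable [MeasurableSpace Ω] {μ : Measure Ω} {τ : ι → ℝ}

lemma transpose_nodalMatrix_mul_diagonal_mul_eq_one [DecidableEq κ]
    (horth : ∀ k ℓ, (∫ ω, φ k ω * φ ℓ ω ∂μ) = if k = ℓ then (1 : ℝ) else 0)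
    (hquad2 : ∀ k ℓ, (∫ ω, φ k ω * φ ℓ ω ∂μ) = ∑ j, τ j * (φ k (ξ j) * φ ℓ (ξ j))) :
    (nodalMatrix φ ξ)ᵀ * diagonal τ * nodalMatrix φ ξ = 1 := by
  ext ℓ m
  rw [transpose_nodalMatrix_mul_diagonal_mul_apply, ← hquad2, horth, one_apply]

lemma galerkinMatrix_eq_of_quadrature [Fintype κ]
    (hquad3 : ∀ k ℓ m, (∫ ω, φ k ω * φ ℓ ω * φ m ω ∂μ) =
      ∑ j, τ j * (φ k (ξ j) * φ ℓ (ξ j) * φ m (ξ j)))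
    (h : κ → ℝ) :
    (Matrix.of fun ℓ m => ∑ k, h k * ∫ ω, φ k ω * φ ℓ ω * φ m ω ∂μ) =
      (nodalMatrix φ ξ)ᵀ * diagonal (fun j => τ j * ∑ k, h k * φ k (ξ j)) *
        nodalMatrix φ ξ := by
  ext ℓ m
  rw [transpose_nodalMatrix_mul_diagonal_mul_apply, of_apply]
  simp only [hquad3, Finset.mul_sum, Finset.sum_mul]
  rw [Finset.sum_comm]
  exact Finset.sum_congr rfl fun j _ => Finset.sum_congr rfl fun k _ => by ring

end Quadrature

theorem galerkin_matrix_posdef_of_quadrature_positivity_general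
    (Ω : Type) [MeasurableSpace Ω] (μ : Measure Ω)
    (K : ℕ)
    (φ : Fin K → Ω → ℝ)
    (horth : ∀ k ℓ, (∫ ω, φ k ω * φ ℓ ω ∂μ) = if k = ℓ then (1 : ℝ) else 0)
    (M : ℕ)
    (ξ : Fin M → Ω) (τ : Fin M → ℝ) (hτ : ∀ j, 0 < τ j)
    (hquad3 : ∀ k ℓ m, (∫ ω, φ k ω * φ ℓ ω * φ m ω ∂μ) =
      ∑ j, τ j * (φ k (ξ j) * φ ℓ (ξ j) * φ m (ξ j)))
    (hquad2 : ∀ k ℓ, (∫ ω, φ k ω * φ ℓ ω ∂μ) =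
      ∑ j, τ j * (φ k (ξ j) * φ ℓ (ξ j)))
    (h : Fin K → ℝ)
    (hpos : ∀ j, 0 < ∑ k, h k * φ k (ξ j))
    (P : Matrix (Fin K) (Fin K) ℝ)
    (hP : P = Matrix.of fun ℓ m => ∑ k, h k * ∫ ω, φ k ω * φ ℓ ω * φ m ω ∂μ) :
    P.PosDef := by
  have hV : Function.Injective (nodalMatrix φ ξ).mulVec :=
    mulVec_injective_of_mul_eq_one
      (transpose_nodalMatrix_mul_diagonal_mul_eq_one horth hquad2)
  have hD : (diagonal fun j => τ j * ∑ k, h k * φ k (ξ j)).PosDef :=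
    .diagonal fun j => mul_pos (hτ j) (hpos j)
  rw [hP, galerkinMatrix_eq_of_quadrature hquad3, ← conjTranspose_eq_transpose_of_trivial]
  exact hD.conjTranspose_mul_mul_same hV

theorem galerkin_matrix_posdef_of_quadrature_positivity
    (Ω : Type) [MeasurableSpace Ω] (μ : Measure Ω)
    (K : ℕ) (hK : 1 ≤ K)
    (φ : Fin K → Ω → ℝ)
    (hmeas : ∀ k, Measurable (φ k))
    (hint : ∀ k ℓ m, Integrable (fun ω => φ k ω * φ ℓ ω * φ m ω) μ)
    (horth : ∀ k ℓ, (∫ ω, φ k ω * φ ℓ ω ∂μ) = if k = ℓ then (1 : ℝ) else 0)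
    (M : ℕ) (hM : 1 ≤ M)
    (ξ : Fin M → Ω) (τ : Fin M → ℝ) (hτ : ∀ j, 0 < τ j)
    (hquad3 : ∀ k ℓ m, (∫ ω, φ k ω * φ ℓ ω * φ m ω ∂μ) =
      ∑ j, τ j * (φ k (ξ j) * φ ℓ (ξ j) * φ m (ξ j)))
    (hquad2 : ∀ k ℓ, (∫ ω, φ k ω * φ ℓ ω ∂μ) =
      ∑ j, τ j * (φ k (ξ j) * φ ℓ (ξ j)))
    (h : Fin K → ℝ)
    (hpos : ∀ j, 0 < ∑ k, h k * φ k (ξ j))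
    (P : Matrix (Fin K) (Fin K) ℝ)
    (hP : P = Matrix.of fun ℓ m => ∑ k, h k * ∫ ω, φ k ω * φ ℓ ω * φ m ω ∂μ) :
    P.PosDef :=
  galerkin_matrix_posdef_of_quadrature_positivity_general Ω μ K φ horth M ξ τ hτ hquad3 hquad2 h
    hpos P hP
end

section
/- Let (Ω, μ) be a measure space, K ≥ 1, and φ_1, …, φ_K : Ω → ℝ measurable functions such that every triple product φ_k φ_ℓ φ_m is μ-integrable and the family is orthonormal: ∫ φ_k φ_ℓ dμ = δ_{kℓ}. Let ξ_1, …, ξ_M ∈ Ω and τ_1, …, τ_M > 0 satisfy, for all k, ℓ, m: ∫ φ_k φ_ℓ φ_m dμ = Σ_j τ_j φ_k(ξ_j) φ_ℓ(ξ_j) φ_m(ξ_j), and for all k, ℓ: ∫ φ_k φ_ℓ dμ = Σ_j τ_j φ_k(ξ_j) φ_ℓ(ξ_j). For a ∈ ℝ^K let 𝒫(a) be the K×K matrix with 𝒫(a)_{ℓ,m} = Σ_k a_k ∫ φ_k φ_ℓ φ_m dμ. Let g > 0 and let ĥ, q̂ˣ, q̂ʸ ∈ ℝ^K with Σ_k ĥ_k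 φ_k(ξ_j) > 0 for every j. Then 𝒫(ĥ) is invertible, and, setting û = 𝒫(ĥ)⁻¹ q̂ˣ, v̂ = 𝒫(ĥ)⁻¹ q̂ʸ, X = 𝒫(q̂ˣ)𝒫(ĥ)⁻¹, Y = 𝒫(q̂ʸ)𝒫(ĥ)⁻¹, the 3K×3K matrices J_F = [[0, I, 0], [g𝒫(ĥ) − X𝒫(û), X + 𝒫(û), 0], [−X𝒫(v̂), 𝒫(v̂), X]] and J_G = [[0, 0, I], [−Y𝒫(û), Y, 𝒫(û)], [g𝒫(ĥ) − Y𝒫(v̂), 0, Y + 𝒫(v̂)]] satisfy: for every n_x, n_y ∈ ℝ with n_x² + n_y² = 1, the matrix n_x J_F + n_y J_G is similar over ℝ to a real symmetric matrix, hence diagonalizable with real eigenvalues. -/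
open Matrix BigOperators MeasureTheory

/-!
Exactness of the quadrature on `P_Λ³` turns each Galerkin matrix into `Bᵀ diag(τ ⊙ a_Λ(ξ)) B`,
where `B` evaluates the basis at the nodes, and exactness on `P_Λ²` with orthonormality gives
`Bᵀ diag(τ) B = 1`, so `B` is injective. Hence every `𝒫(a)` is symmetric and `𝒫(ĥ)` is positive
definite as soon as `h_Λ > 0` at the nodes.

Let `F = (g 𝒫(ĥ))^{1/2}` and `W = n_x X + n_y Y`, so that `W 𝒫(ĥ) = n_x 𝒫(q̂ˣ) + n_y 𝒫(q̂ʸ)` is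
symmetric and therefore `F⁻¹ W F` is symmetric. The block lower-triangular matrix
`S = [[I, 0, 0], [𝒫(û), F, 0], [𝒫(v̂), 0, F]]` conjugates `n_x J_F + n_y J_G` into the symmetric
matrix `[[n_x 𝒫(û) + n_y 𝒫(v̂), n_x F, n_y F], [n_x F, F⁻¹ W F, 0], [n_y F, 0, F⁻¹ W F]]`, which the
spectral theorem diagonalizes.
-/

namespace Matrix

theorem isSymm_transpose_mul_diagonal_mul {m n : Type*} [Fintype m] [DecidableEq m]
    (B : Matrix m n ℝ) (w : m → ℝ) : (Bᵀ * diagonal w * B).IsSymm := by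
  simp [IsSymm, transpose_mul, Matrix.mul_assoc]

section PosDef

variable {m n : Type*} [Fintype m] [Fintype n] [DecidableEq m] [DecidableEq n]

theorem mulVec_injective_of_transpose_mul_diagonal_mul_eq_one {B : Matrix m n ℝ} {c : m → ℝ}
    (hB : Bᵀ * diagonal c * B = 1) : Function.Injective B.mulVec :=
  Function.LeftInverse.injective (g := (Bᵀ * diagonal c).mulVec) fun x => by
    rw [mulVec_mulVec, hB, one_mulVec]

theorem posDef_transpose_mul_diagonal_mul {B : Matrix m n ℝ} {c w : m → ℝ}
    (hB : Bᵀ * diagonal c * B = 1) (hw : ∀ j, 0 < w j) : (Bᵀ * diagonal w * B).PosDef := by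
  simpa [conjTranspose_eq_transpose_of_trivial] using
    (posDef_diagonal_iff.mpr hw).conjTranspose_mul_mul_same
      (mulVec_injective_of_transpose_mul_diagonal_mul_eq_one hB)

end PosDef

section Symmetric

variable {n : Type*} [Fintype n] [DecidableEq n]

open scoped MatrixOrder in
theorem PosDef.exists_isSymm_mul_self_eq {A : Matrix n n ℝ} (hA : A.PosDef) :
    ∃ F : Matrix n n ℝ, F.IsSymm ∧ IsUnit F.det ∧ F * F = A := by
  refine ⟨CFC.sqrt A, ?_, ?_, CFC.sqrt_mul_sqrt_self A hA.posSemidef.nonneg⟩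
  · simpa [conjTranspose_eq_transpose_of_trivial] using
      (CFC.sqrt_nonneg A).posSemidef.isHermitian
  · exact (isUnit_iff_isUnit_det _).mp
      (CFC.isUnit_sqrt_iff_isStrictlyPositive.mpr hA.isStrictlyPositive)

theorem isSymm_inv_mul_mul_of_isSymm_mul_mul_self {R : Type*} [CommRing R] {F W : Matrix n n R}
    (hF : F.IsSymm) (hFdet : IsUnit F.det) (hW : (W * (F * F)).IsSymm) :
    (F⁻¹ * W * F).IsSymm := by
  have hWF : F * F * Wᵀ = W * (F * F) := by
    simpa [transpose_mul, hF.eq] using hW.eq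
  calc (F⁻¹ * W * F)ᵀ = F * Wᵀ * F⁻¹ := by
        simp [transpose_mul, transpose_nonsing_inv, hF.eq, Matrix.mul_assoc]
    _ = F⁻¹ * (F * F * Wᵀ) * F⁻¹ := by
        simp [← Matrix.mul_assoc, nonsing_inv_mul _ hFdet]
    _ = F⁻¹ * W * F := by
        rw [hWF]
        simp [Matrix.mul_assoc, mul_nonsing_inv _ hFdet]

theorem IsSymm.exists_isDiag_conj {C : Matrix n n ℝ} (hC : C.IsSymm) :
    ∃ U D : Matrix n n ℝ, IsUnit U.det ∧ D.IsDiag ∧ C = U * D * U⁻¹ := by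
  have hH : C.IsHermitian := by
    rwa [IsHermitian, conjTranspose_eq_transpose_of_trivial]
  set U : Matrix n n ℝ := (hH.eigenvectorUnitary : Matrix n n ℝ)
  have hU : U * star U = 1 := mem_unitaryGroup_iff.mp hH.eigenvectorUnitary.2
  refine ⟨U, diagonal (RCLike.ofReal ∘ hH.eigenvalues), isUnit_det_of_right_inverse hU,
    isDiag_diagonal _, ?_⟩
  rw [inv_eq_right_inv hU]
  exact hH.spectral_theorem

theorem exists_isDiag_conj_of_isSymm_conj {A S : Matrix n n ℝ} (hS : IsUnit S.det)
    (hC : (S⁻¹ * A * S).IsSymm) :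
    ∃ T D : Matrix n n ℝ, IsUnit T.det ∧ D.IsDiag ∧ A = T * D * T⁻¹ := by
  obtain ⟨U, D, hU, hD, hC⟩ := hC.exists_isDiag_conj
  refine ⟨S * U, D, by rw [det_mul]; exact hS.mul hU, hD, ?_⟩
  calc A = S * (S⁻¹ * A * S) * S⁻¹ := by
        simp [Matrix.mul_assoc, mul_nonsing_inv _ hS, mul_nonsing_inv_cancel_left _ _ hS]
    _ = S * U * D * (S * U)⁻¹ := by
        rw [hC, mul_inv_rev]
        simp only [Matrix.mul_assoc]

end Symmetric

end Matrix

def nodeEvalMatrix {Ω ι J : Type*} (φ : ι → Ω → ℝ) (ξ : J → Ω) : Matrix J ι ℝ :=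
  of fun j k => φ k (ξ j)

section Quadrature

variable {Ω : Type*} [MeasurableSpace Ω] {μ : Measure Ω} {ι J : Type*} [Fintype J]
  [DecidableEq J] {φ : ι → Ω → ℝ} {ξ : J → Ω} {τ : J → ℝ}

theorem transpose_nodeEvalMatrix_mul_diagonal_mul [DecidableEq ι]
    (hquad2 : ∀ k ℓ, ∫ ω, φ k ω * φ ℓ ω ∂μ = ∑ j, τ j * (φ k (ξ j) * φ ℓ (ξ j)))
    (horth : ∀ k ℓ, ∫ ω, φ k ω * φ ℓ ω ∂μ = if k = ℓ then (1 : ℝ) else 0) :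
    (nodeEvalMatrix φ ξ)ᵀ * diagonal τ * nodeEvalMatrix φ ξ = 1 := by
  ext k ℓ
  rw [one_apply, ← horth, hquad2]
  simp only [nodeEvalMatrix, mul_apply, transpose_apply, of_apply, diagonal_apply, mul_ite,
    mul_zero, Finset.sum_ite_eq', Finset.mem_univ, if_true]
  exact Finset.sum_congr rfl fun j _ => by ring

theorem galerkin_eq_transpose_nodeEvalMatrix_mul_diagonal_mul [Fintype ι]
    (hquad3 : ∀ k ℓ m, ∫ ω, φ k ω * φ ℓ ω * φ m ω ∂μ =
      ∑ j, τ j * (φ k (ξ j) * φ ℓ (ξ j) * φ m (ξ j))) (a : ι → ℝ) :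
    (of fun ℓ m => ∑ k, a k * ∫ ω, φ k ω * φ ℓ ω * φ m ω ∂μ) =
      (nodeEvalMatrix φ ξ)ᵀ * diagonal (fun j => τ j * ∑ k, a k * φ k (ξ j)) *
        nodeEvalMatrix φ ξ := by
  ext ℓ m
  simp only [nodeEvalMatrix, mul_apply, transpose_apply, of_apply, diagonal_apply, mul_ite,
    mul_zero, Finset.sum_ite_eq', Finset.mem_univ, if_true, hquad3, Finset.mul_sum,
    Finset.sum_mul]
  rw [Finset.sum_comm]
  exact Finset.sum_congr rfl fun j _ => Finset.sum_congr rfl fun k _ => by ring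

end Quadrature

section Blocks

variable {R : Type*} [CommRing R] {n : Type*}

def symmetrizedBlocks (nx ny : R) (U V F W : Matrix n n R) :
    Matrix (Fin 3) (Fin 3) (Matrix n n R) :=
  !![nx • U + ny • V, nx • F, ny • F; nx • F, W, 0; ny • F, 0, W]

theorem symmetrizedBlocks_transpose_map {nx ny : R} {U V F W : Matrix n n R} (hU : U.IsSymm)
    (hV : V.IsSymm) (hF : F.IsSymm) (hW : W.IsSymm) :
    (symmetrizedBlocks nx ny U V F W)ᵀ.map transpose = symmetrizedBlocks nx ny U V F W := by
  ext1 i j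
  fin_cases i <;> fin_cases j <;> simp [symmetrizedBlocks, hU.eq, hV.eq, hF.eq, hW.eq]

variable [Fintype n] [DecidableEq n]

def normalFluxBlocks (g nx ny : R) (H U V W : Matrix n n R) :
    Matrix (Fin 3) (Fin 3) (Matrix n n R) :=
  !![0, nx • 1, ny • 1;
     (nx * g) • H - W * U, W + nx • U, ny • U;
     (ny * g) • H - W * V, nx • V, W + ny • V]

def symmetrizerBlocks (U V F : Matrix n n R) : Matrix (Fin 3) (Fin 3) (Matrix n n R) :=
  !![1, 0, 0; U, F, 0; V, 0, F]

variable {U V F : Matrix n n R}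

theorem isUnit_symmetrizerBlocks (hF : IsUnit F.det) : IsUnit (symmetrizerBlocks U V F) := by
  refine IsUnit.of_mul_eq_one !![1, 0, 0; -(F⁻¹ * U), F⁻¹, 0; -(F⁻¹ * V), 0, F⁻¹] ?_
  rw [symmetrizerBlocks, mul_fin_three, one_fin_three]
  ext1 i j
  fin_cases i <;> fin_cases j <;> simp [← Matrix.mul_assoc, mul_nonsing_inv _ hF]

theorem normalFluxBlocks_mul_symmetrizerBlocks {g nx ny : R} {H W : Matrix n n R}
    (hF : IsUnit F.det) (hFF : F * F = g • H) :
    normalFluxBlocks g nx ny H U V W * symmetrizerBlocks U V F =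
      symmetrizerBlocks U V F * symmetrizedBlocks nx ny U V F (F⁻¹ * W * F) := by
  rw [normalFluxBlocks, symmetrizerBlocks, symmetrizedBlocks, mul_fin_three, mul_fin_three]
  ext1 i j
  fin_cases i <;> fin_cases j <;> simp [← Matrix.mul_assoc, mul_nonsing_inv _ hF] <;>
    simp only [mul_add, add_mul, mul_smul_comm, smul_mul_assoc, hFF, smul_smul] <;> module

end Blocks

theorem block3_eq_compAlgEquiv (K : ℕ) (M : Matrix (Fin 3) (Fin 3) (Matrix (Fin K) (Fin K) ℝ)) :
    block3 K M = compAlgEquiv (Fin 3) (Fin K) ℝ ℝ M :=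
  rfl

theorem exists_conj_isSymm_block3 {K : ℕ}
    {A S C : Matrix (Fin 3) (Fin 3) (Matrix (Fin K) (Fin K) ℝ)}
    (hS : IsUnit S) (hAS : A * S = S * C) (hC : Cᵀ.map transpose = C) :
    ∃ T, IsUnit T.det ∧ (T⁻¹ * block3 K A * T).IsSymm := by
  set e := compAlgEquiv (Fin 3) (Fin K) ℝ ℝ
  have hT : IsUnit (e S).det := (isUnit_iff_isUnit_det _).mp (hS.map e)
  refine ⟨e S, hT, ?_⟩
  rw [block3_eq_compAlgEquiv, Matrix.mul_assoc, ← map_mul, hAS, map_mul, ← Matrix.mul_assoc,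
    nonsing_inv_mul _ hT, Matrix.one_mul]
  exact congrArg (comp _ _ _ _ ℝ) hC

theorem sg_swe_hyperbolic_of_quadrature_positivity_general
    (Ω : Type) [MeasurableSpace Ω] (μ : Measure Ω)
    (K : ℕ)
    (φ : Fin K → Ω → ℝ)
    (horth : ∀ k ℓ, (∫ ω, φ k ω * φ ℓ ω ∂μ) = if k = ℓ then (1 : ℝ) else 0)
    (M : ℕ)
    (ξ : Fin M → Ω) (τ : Fin M → ℝ) (hτ : ∀ j, 0 < τ j)
    (hquad3 : ∀ k ℓ m, (∫ ω, φ k ω * φ ℓ ω * φ m ω ∂μ) =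
      ∑ j, τ j * (φ k (ξ j) * φ ℓ (ξ j) * φ m (ξ j)))
    (hquad2 : ∀ k ℓ, (∫ ω, φ k ω * φ ℓ ω ∂μ) =
      ∑ j, τ j * (φ k (ξ j) * φ ℓ (ξ j)))
    (P : (Fin K → ℝ) → Matrix (Fin K) (Fin K) ℝ)
    (hPdef : ∀ a, P a =
      Matrix.of fun ℓ m => ∑ k, a k * ∫ ω, φ k ω * φ ℓ ω * φ m ω ∂μ)
    (g : ℝ) (hg : 0 < g)
    (h qx qy : Fin K → ℝ)
    (hpos : ∀ j, 0 < ∑ k, h k * φ k (ξ j))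
    (u v : Fin K → ℝ)
    (X Y : Matrix (Fin K) (Fin K) ℝ)
    (hX : X = P qx * (P h)⁻¹)
    (hY : Y = P qy * (P h)⁻¹)
    (JF JG : Matrix (Fin 3 × Fin K) (Fin 3 × Fin K) ℝ)
    (hJF : JF = block3 K
      !![(0 : Matrix (Fin K) (Fin K) ℝ), 1, 0;
         g • P h - X * P u, X + P u, 0;
         -(X * P v), P v, X])
    (hJG : JG = block3 K
      !![(0 : Matrix (Fin K) (Fin K) ℝ), 0, 1;
         -(Y * P u), Y, P u;
         g • P h - Y * P v, 0, Y + P v]) :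
    IsUnit (P h).det ∧
    ∀ nx ny : ℝ, nx ^ 2 + ny ^ 2 = 1 →
      (∃ S : Matrix (Fin 3 × Fin K) (Fin 3 × Fin K) ℝ,
          IsUnit S.det ∧ (S⁻¹ * (nx • JF + ny • JG) * S).IsSymm) ∧
      (∃ S D : Matrix (Fin 3 × Fin K) (Fin 3 × Fin K) ℝ,
          IsUnit S.det ∧ D.IsDiag ∧ nx • JF + ny • JG = S * D * S⁻¹) := by
  have hP (a : Fin K → ℝ) : P a = (nodeEvalMatrix φ ξ)ᵀ *
      diagonal (fun j => τ j * ∑ k, a k * φ k (ξ j)) * nodeEvalMatrix φ ξ :=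
    (hPdef a).trans (galerkin_eq_transpose_nodeEvalMatrix_mul_diagonal_mul hquad3 a)
  have hPsymm (a : Fin K → ℝ) : (P a).IsSymm := hP a ▸ isSymm_transpose_mul_diagonal_mul _ _
  have hPh : (P h).PosDef := hP h ▸ posDef_transpose_mul_diagonal_mul
    (transpose_nodeEvalMatrix_mul_diagonal_mul hquad2 horth) fun j => mul_pos (hτ j) (hpos j)
  have hdet : IsUnit (P h).det := (isUnit_iff_isUnit_det _).mp hPh.isUnit
  refine ⟨hdet, fun nx ny _ => ?_⟩
  obtain ⟨F, hFsymm, hF, hFF⟩ := (hPh.smul hg).exists_isSymm_mul_self_eq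
  set W := nx • X + ny • Y
  have hWF : (W * (F * F)).IsSymm := by
    rw [hFF, mul_smul_comm, add_mul, smul_mul_assoc, smul_mul_assoc, hX, hY,
      nonsing_inv_mul_cancel_right _ _ hdet, nonsing_inv_mul_cancel_right _ _ hdet]
    exact (((hPsymm qx).smul nx).add ((hPsymm qy).smul ny)).smul g
  have hflux : nx • JF + ny • JG = block3 K (normalFluxBlocks g nx ny (P h) (P u) (P v) W) := by
    simp only [hJF, hJG, block3_eq_compAlgEquiv, ← map_smul, ← map_add]
    refine congrArg _ ?_
    ext1 i j
    fin_cases i <;> fin_cases j <;> simp [normalFluxBlocks, W, add_mul] <;> module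
  obtain ⟨S, hS, hsymm⟩ := exists_conj_isSymm_block3 (isUnit_symmetrizerBlocks hF)
    (normalFluxBlocks_mul_symmetrizerBlocks hF hFF)
    (symmetrizedBlocks_transpose_map (hPsymm u) (hPsymm v) hFsymm
      (isSymm_inv_mul_mul_of_isSymm_mul_mul_self hFsymm hF hWF))
  rw [← hflux] at hsymm
  exact ⟨⟨S, hS, hsymm⟩, exists_isDiag_conj_of_isSymm_conj hS hsymm⟩

theorem sg_swe_hyperbolic_of_quadrature_positivity
    (Ω : Type) [MeasurableSpace Ω] (μ : Measure Ω)
    (K : ℕ) (hK : 1 ≤ K)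
    (φ : Fin K → Ω → ℝ)
    (hmeas : ∀ k, Measurable (φ k))
    (hint : ∀ k ℓ m, Integrable (fun ω => φ k ω * φ ℓ ω * φ m ω) μ)
    (horth : ∀ k ℓ, (∫ ω, φ k ω * φ ℓ ω ∂μ) = if k = ℓ then (1 : ℝ) else 0)
    (M : ℕ) (hM : 1 ≤ M)
    (ξ : Fin M → Ω) (τ : Fin M → ℝ) (hτ : ∀ j, 0 < τ j)
    (hquad3 : ∀ k ℓ m, (∫ ω, φ k ω * φ ℓ ω * φ m ω ∂μ) =
      ∑ j, τ j * (φ k (ξ j) * φ ℓ (ξ j) * φ m (ξ j)))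
    (hquad2 : ∀ k ℓ, (∫ ω, φ k ω * φ ℓ ω ∂μ) =
      ∑ j, τ j * (φ k (ξ j) * φ ℓ (ξ j)))
    (P : (Fin K → ℝ) → Matrix (Fin K) (Fin K) ℝ)
    (hPdef : ∀ a, P a =
      Matrix.of fun ℓ m => ∑ k, a k * ∫ ω, φ k ω * φ ℓ ω * φ m ω ∂μ)
    (g : ℝ) (hg : 0 < g)
    (h qx qy : Fin K → ℝ)
    (hpos : ∀ j, 0 < ∑ k, h k * φ k (ξ j))
    (u v : Fin K → ℝ)
    (hu : u = (P h)⁻¹ *ᵥ qx)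
    (hv : v = (P h)⁻¹ *ᵥ qy)
    (X Y : Matrix (Fin K) (Fin K) ℝ)
    (hX : X = P qx * (P h)⁻¹)
    (hY : Y = P qy * (P h)⁻¹)
    (JF JG : Matrix (Fin 3 × Fin K) (Fin 3 × Fin K) ℝ)
    (hJF : JF = block3 K
      !![(0 : Matrix (Fin K) (Fin K) ℝ), 1, 0;
         g • P h - X * P u, X + P u, 0;
         -(X * P v), P v, X])
    (hJG : JG = block3 K
      !![(0 : Matrix (Fin K) (Fin K) ℝ), 0, 1;
         -(Y * P u), Y, P u;
         g • P h - Y * P v, 0, Y + P v]) :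
    IsUnit (P h).det ∧
    ∀ nx ny : ℝ, nx ^ 2 + ny ^ 2 = 1 →
      (∃ S : Matrix (Fin 3 × Fin K) (Fin 3 × Fin K) ℝ,
          IsUnit S.det ∧ (S⁻¹ * (nx • JF + ny • JG) * S).IsSymm) ∧
      (∃ S D : Matrix (Fin 3 × Fin K) (Fin 3 × Fin K) ℝ,
          IsUnit S.det ∧ D.IsDiag ∧ nx • JF + ny • JG = S * D * S⁻¹) :=
  sg_swe_hyperbolic_of_quadrature_positivity_general Ω μ K φ horth M ξ τ hτ hquad3 hquad2 P hPdef g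
    hg h qx qy hpos u v X Y hX hY JF JG hJF hJG
end

section
/- Let (Ω, μ) be a measure space, K ≥ 1, and φ_1, …, φ_K : Ω → ℝ measurable functions such that every triple product φ_k φ_ℓ φ_m is μ-integrable, the family is orthonormal (∫ φ_k φ_ℓ dμ = δ_{kℓ}), and φ_1 is the constant function 1 on Ω. Let ĥ ∈ ℝ^K and let 𝒫(ĥ) be the K×K matrix with entries 𝒫(ĥ)_{ℓ,m} = Σ_k ĥ_k ∫ φ_k φ_ℓ φ_m dμ. If 𝒫(ĥ) is positive definite, then ĥ_1 > 0. -/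
open Matrix BigOperators MeasureTheory

/-!
When `φ i ≡ 1`, the triple products against `φ i` collapse to the orthonormality relations, so the
`i`-th column of the Galerkin matrix is the coefficient vector `ĥ` itself; in particular its
diagonal entry at `i` is `ĥ i`, which is positive because diagonal entries of a positive definite
matrix are.
-/

section Galerkin

variable {Ω ι : Type*} [MeasurableSpace Ω] [Fintype ι]

noncomputable def galerkinMatrix (μ : Measure Ω) (φ : ι → Ω → ℝ) (h : ι → ℝ) :
    Matrix ι ι ℝ :=
  Matrix.of fun ℓ m => ∑ k, h k * ∫ ω, φ k ω * φ ℓ ω * φ m ω ∂μ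

theorem galerkinMatrix_apply_of_eq_one [DecidableEq ι] {μ : Measure Ω} {φ : ι → Ω → ℝ}
    (horth : ∀ k ℓ, (∫ ω, φ k ω * φ ℓ ω ∂μ) = if k = ℓ then (1 : ℝ) else 0)
    {i : ι} (hφi : φ i = fun _ => 1) (h : ι → ℝ) (ℓ : ι) :
    galerkinMatrix μ φ h ℓ i = h ℓ := by
  simp only [galerkinMatrix, Matrix.of_apply, hφi, mul_one, horth, mul_ite, mul_zero,
    Finset.sum_ite_eq', Finset.mem_univ, if_true]

end Galerkin

theorem mean_height_pos_of_galerkin_posdef_general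
    (Ω : Type) [MeasurableSpace Ω] (μ : Measure Ω)
    (K : ℕ) (hK : 1 ≤ K)
    (φ : Fin K → Ω → ℝ)
    (horth : ∀ k ℓ, (∫ ω, φ k ω * φ ℓ ω ∂μ) = if k = ℓ then (1 : ℝ) else 0)
    (hφ1 : φ ⟨0, hK⟩ = fun _ => (1 : ℝ))
    (h : Fin K → ℝ)
    (P : Matrix (Fin K) (Fin K) ℝ)
    (hP : P = Matrix.of fun ℓ m => ∑ k, h k * ∫ ω, φ k ω * φ ℓ ω * φ m ω ∂μ)
    (hpd : P.PosDef) :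
    0 < h ⟨0, hK⟩ := by
  have hdiag : P ⟨0, hK⟩ ⟨0, hK⟩ = h ⟨0, hK⟩ :=
    hP ▸ galerkinMatrix_apply_of_eq_one horth hφ1 h _
  exact hdiag ▸ hpd.diag_pos

theorem mean_height_pos_of_galerkin_posdef
    (Ω : Type) [MeasurableSpace Ω] (μ : Measure Ω)
    (K : ℕ) (hK : 1 ≤ K)
    (φ : Fin K → Ω → ℝ)
    (hmeas : ∀ k, Measurable (φ k))
    (hint : ∀ k ℓ m, Integrable (fun ω => φ k ω * φ ℓ ω * φ m ω) μ)
    (horth : ∀ k ℓ, (∫ ω, φ k ω * φ ℓ ω ∂μ) = if k = ℓ then (1 : ℝ) else 0)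
    (hφ1 : φ ⟨0, hK⟩ = fun _ => (1 : ℝ))
    (h : Fin K → ℝ)
    (P : Matrix (Fin K) (Fin K) ℝ)
    (hP : P = Matrix.of fun ℓ m => ∑ k, h k * ∫ ω, φ k ω * φ ℓ ω * φ m ω ∂μ)
    (hpd : P.PosDef) :
    0 < h ⟨0, hK⟩ :=
  mean_height_pos_of_galerkin_posdef_general Ω μ K hK φ horth hφ1 h P hP hpd
end
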